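/- Let (Ω, η, ξ) be a projective triple of rational 1-forms on ℂ² and suppose ξ admits a rational first integral in the sense that ξ = g·dR for some g, R ∈ K with g ≠ 0 and dR ≠ (0,0). Then there exist H, F ∈ K with dF ∧ dR = 0 such that η + dg/g = H·dR and g·Ω = dH + (F − H²/2)·dR. (This is the algebraic core of the theorem that a foliation admitting a projective triple whose transverse form has a meromorphic first integral is a pull-back of a Riccati foliation.) -/

import Mathlib

/-! Write `ξ = g dR`. Since `d(g dR) = dg ∧ dR`, (Proj.3) says `(η + dg/g) ∧ dR = 0`, so
`η + dg/g = H dR`. As `dg/g` is closed, (Proj.2) then reads `dH ∧ dR = gΩ ∧ dR`, so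
`gΩ = dH + c dR`. Finally `g` times (Proj.1) gives
`d(gΩ) = (dg + gη) ∧ Ω = H dR ∧ gΩ = H dR ∧ dH`, while `d(gΩ) = dc ∧ dR`; hence `F = c + H²/2`
satisfies `dF ∧ dR = 0`. The only input from `ℂ[x,y]` is that the extended derivations
commute. -/

open MvPolynomial

noncomputable section

/-- The field of rational functions `ℂ(x,y)`. -/
abbrev RatF : Type := FractionRing (MvPolynomial (Fin 2) ℂ)

/-- Wedge product of two rational 1-forms: `ω ∧ θ = ω₁ θ₂ - ω₂ θ₁`. -/
def wedge (ω θ : RatF × RatF) : RatF := ω.1 * θ.2 - ω.2 * θ.1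

/-- Exterior derivative of a rational 1-form: `dω = ∂x ω₂ - ∂y ω₁`. -/
def extd (dx dy : Derivation ℂ RatF RatF) (ω : RatF × RatF) : RatF := dx ω.2 - dy ω.1

/-- Differential of a rational function: `dF = (∂x F, ∂y F)`. -/
def d0 (dx dy : Derivation ℂ RatF RatF) (F : RatF) : RatF × RatF := (dx F, dy F)

/-- The derivations `dx`, `dy` extend the partial derivatives on `ℂ[x,y]`. -/
def ExtendsPartials (dx dy : Derivation ℂ RatF RatF) : Prop :=
  (∀ p : MvPolynomial (Fin 2) ℂ,
      dx (algebraMap (MvPolynomial (Fin 2) ℂ) RatF p)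
        = algebraMap (MvPolynomial (Fin 2) ℂ) RatF (pderiv 0 p)) ∧
  (∀ p : MvPolynomial (Fin 2) ℂ,
      dy (algebraMap (MvPolynomial (Fin 2) ℂ) RatF p)
        = algebraMap (MvPolynomial (Fin 2) ℂ) RatF (pderiv 1 p))

/-- `(Ω, η, ξ)` is a projective triple: (Proj.1) `dΩ = η∧Ω`, (Proj.2) `dη = Ω∧ξ`,
(Proj.3) `dξ = ξ∧η`. -/
def IsProjTriple (dx dy : Derivation ℂ RatF RatF) (Ω η ξ : RatF × RatF) : Prop :=
  extd dx dy Ω = wedge η Ω ∧ extd dx dy η = wedge Ω ξ ∧ extd dx dy ξ = wedge ξ η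

theorem MvPolynomial.pderiv_pderiv_comm {R σ : Type*} [CommRing R] (i j : σ)
    (p : MvPolynomial σ R) : pderiv i (pderiv j p) = pderiv j (pderiv i p) := by
  classical
  have hbracket : ⁅pderiv i, pderiv j⁆ = (0 : Derivation R (MvPolynomial σ R) _) :=
    derivation_ext fun k => by
      rw [Derivation.commutator_apply, pderiv_X, pderiv_X, Pi.single_apply, Pi.single_apply]
      split_ifs <;> simp
  rw [← sub_eq_zero, ← Derivation.commutator_apply, hbracket, Derivation.zero_apply]

theorem Derivation.eq_zero_of_forall_algebraMap {R A K : Type*} [CommRing R] [CommRing A]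
    [Field K] [Algebra A K] [IsFractionRing A K] [Algebra R K] (D : Derivation R K K)
    (h : ∀ a : A, D (algebraMap A K a) = 0) : D = 0 := by
  ext z
  obtain ⟨a, b, -, rfl⟩ := IsFractionRing.div_surjective (A := A) z
  simp [Derivation.leibniz_div, h]

theorem ExtendsPartials.comm {dx dy : Derivation ℂ RatF RatF} (hext : ExtendsPartials dx dy)
    (f : RatF) : dx (dy f) = dy (dx f) := by
  have hbracket : ⁅dx, dy⁆ = 0 :=
    Derivation.eq_zero_of_forall_algebraMap (A := MvPolynomial (Fin 2) ℂ) _ fun p => by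
      rw [Derivation.commutator_apply, hext.1, hext.2, hext.2, hext.1, pderiv_pderiv_comm,
        sub_self]
  rw [← sub_eq_zero, ← Derivation.commutator_apply, hbracket, Derivation.zero_apply]

section FormCalculus

variable {dx dy : Derivation ℂ RatF RatF}

theorem wedge_add_left (ω θ τ : RatF × RatF) : wedge (ω + θ) τ = wedge ω τ + wedge θ τ := by
  simp only [wedge, Prod.fst_add, Prod.snd_add]; ring

theorem wedge_sub_left (ω θ τ : RatF × RatF) : wedge (ω - θ) τ = wedge ω τ - wedge θ τ := by
  simp only [wedge, Prod.fst_sub, Prod.snd_sub]; ring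

theorem wedge_add_right (ω θ τ : RatF × RatF) : wedge ω (θ + τ) = wedge ω θ + wedge ω τ := by
  simp only [wedge, Prod.fst_add, Prod.snd_add]; ring

theorem wedge_smul_left (f : RatF) (ω θ : RatF × RatF) : wedge (f • ω) θ = f * wedge ω θ := by
  simp only [wedge, Prod.smul_fst, Prod.smul_snd, smul_eq_mul]; ring

theorem wedge_smul_right (f : RatF) (ω θ : RatF × RatF) : wedge ω (f • θ) = f * wedge ω θ := by
  simp only [wedge, Prod.smul_fst, Prod.smul_snd, smul_eq_mul]; ring

theorem wedge_self (ω : RatF × RatF) : wedge ω ω = 0 := by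
  simp only [wedge]; ring

theorem wedge_comm (ω θ : RatF × RatF) : wedge ω θ = -wedge θ ω := by
  simp only [wedge]; ring

theorem exists_eq_smul_of_wedge_eq_zero {ω θ : RatF × RatF} (hθ : θ ≠ 0) (h : wedge ω θ = 0) :
    ∃ f : RatF, ω = f • θ := by
  obtain ⟨θ₁, θ₂⟩ := θ
  simp only [wedge] at h
  by_cases h₁ : θ₁ = 0
  · have h₂ : θ₂ ≠ 0 := fun h₂ => hθ (by rw [h₁, h₂]; rfl)
    refine ⟨ω.2 / θ₂, Prod.ext ?_ ?_⟩
    · simpa [h₁, h₂] using h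
    · simp [h₂]
  · refine ⟨ω.1 / θ₁, Prod.ext ?_ ?_⟩
    · simp [h₁]
    · simp only [Prod.smul_snd, smul_eq_mul]
      field_simp
      linear_combination -h

theorem d0_add (f g : RatF) : d0 dx dy (f + g) = d0 dx dy f + d0 dx dy g := by
  simp [d0]

theorem d0_inv (g : RatF) : d0 dx dy g⁻¹ = -(g⁻¹ ^ 2) • d0 dx dy g := by
  simp [d0, Derivation.leibniz_inv]

theorem d0_sq_div_two (H : RatF) : d0 dx dy (H ^ 2 / 2) = H • d0 dx dy H := by
  have h2 : ∀ D : Derivation ℂ RatF RatF, D 2 = 0 := fun D => by simpa using D.map_natCast 2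
  simp only [d0, Derivation.leibniz_div_const _ _ _ (h2 _), Derivation.leibniz_pow,
    Prod.smul_mk, smul_eq_mul]
  congr 1 <;> ring

theorem extd_add (ω θ : RatF × RatF) : extd dx dy (ω + θ) = extd dx dy ω + extd dx dy θ := by
  simp only [extd, Prod.fst_add, Prod.snd_add, map_add]; ring

theorem extd_sub (ω θ : RatF × RatF) : extd dx dy (ω - θ) = extd dx dy ω - extd dx dy θ := by
  simp only [extd, Prod.fst_sub, Prod.snd_sub, map_sub]; ring

theorem extd_smul (f : RatF) (ω : RatF × RatF) :
    extd dx dy (f • ω) = wedge (d0 dx dy f) ω + f * extd dx dy ω := by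
  simp only [extd, wedge, d0, Prod.smul_fst, Prod.smul_snd, smul_eq_mul, Derivation.leibniz]
  ring

theorem extd_d0 (comm : ∀ f, dx (dy f) = dy (dx f)) (F : RatF) :
    extd dx dy (d0 dx dy F) = 0 := by
  simp [extd, d0, comm]

theorem extd_inv_smul_d0 (comm : ∀ f, dx (dy f) = dy (dx f)) (g : RatF) :
    extd dx dy (g⁻¹ • d0 dx dy g) = 0 := by
  rw [extd_smul, d0_inv, wedge_smul_left, wedge_self, extd_d0 comm]; ring

end FormCalculus

section ProjectiveTriple

variable {dx dy : Derivation ℂ RatF RatF} {Ω η : RatF × RatF} {g R H : RatF}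

theorem exists_add_inv_smul_d0_eq_smul_d0 (comm : ∀ f, dx (dy f) = dy (dx f))
    (hg : g ≠ 0) (hR : d0 dx dy R ≠ 0)
    (h3 : extd dx dy (g • d0 dx dy R) = wedge (g • d0 dx dy R) η) :
    ∃ H : RatF, η + g⁻¹ • d0 dx dy g = H • d0 dx dy R := by
  apply exists_eq_smul_of_wedge_eq_zero hR
  have hdg : wedge (d0 dx dy g) (d0 dx dy R) = g * wedge (d0 dx dy R) η := by
    simpa [extd_smul, extd_d0 comm, wedge_smul_left] using h3
  rw [wedge_add_left, wedge_smul_left, hdg, wedge_comm (d0 dx dy R)]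
  field_simp
  ring

theorem exists_smul_eq_d0_add_smul_d0 (comm : ∀ f, dx (dy f) = dy (dx f))
    (hR : d0 dx dy R ≠ 0)
    (hη : η + g⁻¹ • d0 dx dy g = H • d0 dx dy R)
    (h2 : extd dx dy η = wedge Ω (g • d0 dx dy R)) :
    ∃ c : RatF, g • Ω = d0 dx dy H + c • d0 dx dy R := by
  have hdη : extd dx dy η = wedge (d0 dx dy H) (d0 dx dy R) := by
    rw [eq_sub_of_add_eq hη, extd_sub, extd_inv_smul_d0 comm, extd_smul, extd_d0 comm]
    ring
  have hwedge : wedge (g • Ω - d0 dx dy H) (d0 dx dy R) = 0 := by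
    rw [wedge_sub_left, wedge_smul_left, ← wedge_smul_right, ← h2, hdη, sub_self]
  obtain ⟨c, hc⟩ := exists_eq_smul_of_wedge_eq_zero hR hwedge
  exact ⟨c, sub_eq_iff_eq_add'.mp hc⟩

theorem wedge_d0_add_sq_div_two_eq_zero (comm : ∀ f, dx (dy f) = dy (dx f))
    (hg : g ≠ 0) {c : RatF}
    (hη : η + g⁻¹ • d0 dx dy g = H • d0 dx dy R)
    (hΩ : g • Ω = d0 dx dy H + c • d0 dx dy R) (h1 : extd dx dy Ω = wedge η Ω) :
    wedge (d0 dx dy (c + H ^ 2 / 2)) (d0 dx dy R) = 0 := by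
  have hgη : d0 dx dy g + g • η = (g * H) • d0 dx dy R := by
    rw [mul_smul, ← hη, smul_add, smul_smul, mul_inv_cancel₀ hg, one_smul, add_comm]
  have hdc : wedge (d0 dx dy c) (d0 dx dy R) = -wedge (d0 dx dy (H ^ 2 / 2)) (d0 dx dy R) :=
    calc wedge (d0 dx dy c) (d0 dx dy R) = extd dx dy (g • Ω) := by
          rw [hΩ, extd_add, extd_d0 comm, extd_smul, extd_d0 comm]; ring
      _ = wedge (d0 dx dy g + g • η) Ω := by
          rw [extd_smul, h1, wedge_add_left, wedge_smul_left]
      _ = H * wedge (d0 dx dy R) (g • Ω) := by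
          rw [hgη, wedge_smul_left, wedge_smul_right]; ring
      _ = -wedge (d0 dx dy (H ^ 2 / 2)) (d0 dx dy R) := by
          rw [hΩ, wedge_add_right, wedge_smul_right, wedge_self, d0_sq_div_two, wedge_smul_left,
            wedge_comm (d0 dx dy R)]
          ring
  rw [d0_add, wedge_add_left, hdc, neg_add_cancel]

end ProjectiveTriple

/-- If `(Ω, η, ξ)` is a projective triple and `ξ = g dR` with `g ≠ 0`, `dR ≠ 0`,
then there are `H, F ∈ K` with `dF ∧ dR = 0`, `η + dg/g = H dR` and
`g Ω = dH + (F - H²/2) dR`. -/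
theorem projTriple_xi_firstIntegral (dx dy : Derivation ℂ RatF RatF)
    (hext : ExtendsPartials dx dy) (Ω η ξ : RatF × RatF)
    (h : IsProjTriple dx dy Ω η ξ) (g R : RatF) (hg : g ≠ 0)
    (hR : d0 dx dy R ≠ 0) (hξ : ξ = g • d0 dx dy R) :
    ∃ H F : RatF, wedge (d0 dx dy F) (d0 dx dy R) = 0 ∧
      η + (dx g / g, dy g / g) = H • d0 dx dy R ∧
      g • Ω = d0 dx dy H + (F - H ^ 2 / 2) • d0 dx dy R := by
  obtain ⟨h1, h2, h3⟩ := h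
  subst hξ
  have comm := hext.comm
  have hdlog : (dx g / g, dy g / g) = g⁻¹ • d0 dx dy g := by
    simp [d0, div_eq_inv_mul]
  obtain ⟨H, hH⟩ := exists_add_inv_smul_d0_eq_smul_d0 comm hg hR h3
  obtain ⟨c, hc⟩ := exists_smul_eq_d0_add_smul_d0 comm hR hH h2
  refine ⟨H, c + H ^ 2 / 2, wedge_d0_add_sq_div_two_eq_zero comm hg hH hc h1, hdlog ▸ hH, ?_⟩
  rwa [add_sub_cancel_right]
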